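/- Let q be a positive integer and for each divisor q' of q let Ê^q_{q'} ⊂ L²₀(SL₂(ℤ/qℤ)) be the subspace of functions invariant under the left action of the kernel of SL₂(ℤ/qℤ) → SL₂(ℤ/q'ℤ). Define E^q_{q'} = Ê^q_{q'} ∩ (⊕_{q''|q', q''≠q'} Ê^q_{q''})^⊥. Then for square-free q, L²₀(SL₂(ℤ/qℤ)) decomposes as the orthogonal direct sum ⊕_{1 ≠ q' | q} E^q_{q'}. -/

import Mathlib

open Matrix

/-- Functions on `SL₂(ℤ/qℤ)`. -/
abbrev SL2Mod (q : ℕ) := SpecialLinearGroup (Fin 2) (ZMod q)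

/-- The standard Hermitian inner product on functions on `SL₂(ℤ/qℤ)`. -/
noncomputable def innerSL2 (q : ℕ) [NeZero q] (φ ψ : SL2Mod q → ℂ) : ℂ :=
  ∑ g : SL2Mod q, (starRingEnd ℂ) (φ g) * ψ g

/-- `Ê^q_{d}`: functions in `L²₀(SL₂(ℤ/qℤ))` invariant under the left action of
the kernel of the reduction `SL₂(ℤ/qℤ) → SL₂(ℤ/dℤ)`. -/
def EhatSL2 (q d : ℕ) [NeZero q] (h : d ∣ q) : Set (SL2Mod q → ℂ) :=
  {φ | (∑ g : SL2Mod q, φ g = 0) ∧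
    ∀ γ : SL2Mod q, SpecialLinearGroup.map (ZMod.castHom h (ZMod d)) γ = 1 →
      ∀ g : SL2Mod q, φ (γ⁻¹ * g) = φ g}

/-- `E^q_{d}`: the "new" functions at level `d`, i.e. elements of `Ê^q_d`
orthogonal to `Ê^q_{d'}` for every proper divisor `d'` of `d`. -/
noncomputable def EnewSL2 (q d : ℕ) [NeZero q] (h : d ∣ q) : Set (SL2Mod q → ℂ) :=
  {φ | φ ∈ EhatSL2 q d h ∧
    ∀ (d' : ℕ) (h' : d' ∣ d), d' ≠ d →
      ∀ ψ ∈ EhatSL2 q d' (h'.trans h), innerSL2 q φ ψ = 0}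

/-!
Let `K_a ⊴ SL₂(ℤ/q)` be the kernel of reduction mod `a`. For square-free `q = a c` the Chinese
remainder theorem makes `SL₂(ℤ/q) → SL₂(ℤ/a) × SL₂(ℤ/c)` bijective, and this yields
`K_{gcd(a,b)} ⊆ K_a K_b` for all `a, b ∣ q`. Hence, if `ψ` is `K_b`-invariant, its sum over
`K_a`-translates is `K_{gcd(a,b)}`-invariant. If `φ ∈ E_a` and `a ∤ b`, then `gcd(a,b)` is a
proper divisor of `a`, so `φ` is orthogonal to that sum, which by the `K_a`-invariance of `φ`
equals `|K_a| ⟨φ, ψ⟩`: the spaces `E_d` are pairwise orthogonal.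

Existence is Gram–Schmidt along the divisor lattice: write `φ ∈ Ê_d` as `y + z` with `y` in
`∑_{e ⊊ d} Ê_e` and `z` orthogonal to it; then `z ∈ E_d`, and `y` is handled by induction.
Finally `E_1 = 0`, since `Ê_1` consists of constant functions with sum zero.
-/
theorem ZMod.castHom_prod_castHom_bijective {m n : ℕ} (h : m.Coprime n) :
    Function.Bijective ((ZMod.castHom (dvd_mul_right m n) (ZMod m)).prod
      (ZMod.castHom (dvd_mul_left n m) (ZMod n))) := by
  rw [RingHom.ext_zmod (RingHom.prod _ _) (ZMod.chineseRemainder h).toRingHom]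
  exact (ZMod.chineseRemainder h).bijective

namespace Matrix.SpecialLinearGroup

variable {n : Type*} [Fintype n] [DecidableEq n] {R S T : Type*} [CommRing R] [CommRing S]
  [CommRing T]

theorem map_comp (f : R →+* S) (g : S →+* T) : map (g.comp f) = (map g).comp (map (n := n) f) :=
  rfl

theorem exists_map_eq_and_map_eq {f : R →+* S} {g : R →+* T}
    (hfg : Function.Bijective (f.prod g)) (A : SpecialLinearGroup n S)
    (C : SpecialLinearGroup n T) : ∃ M : SpecialLinearGroup n R, map f M = A ∧ map g M = C := by
  choose x hx using hfg.2
  let M₀ : Matrix n n R := .of fun i j => x (A i j, C i j)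
  have hf : M₀.map f = A := by ext i j; exact congrArg Prod.fst (hx (A i j, C i j))
  have hg : M₀.map g = C := by ext i j; exact congrArg Prod.snd (hx (A i j, C i j))
  have hdet : M₀.det = 1 := hfg.1 <| Prod.ext
    (show f M₀.det = f 1 by rw [RingHom.map_det, RingHom.mapMatrix_apply, hf, A.prop, map_one])
    (show g M₀.det = g 1 by rw [RingHom.map_det, RingHom.mapMatrix_apply, hg, C.prop, map_one])
  exact ⟨⟨M₀, hdet⟩, Subtype.ext hf, Subtype.ext hg⟩

theorem ker_map_inf_ker_map {f : R →+* S} {g : R →+* T}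
    (hfg : Function.Injective (f.prod g)) :
    (map (n := n) f).ker ⊓ (map g).ker = ⊥ := by
  refine eq_bot_iff.2 fun M ⟨hf, hg⟩ => Subgroup.mem_bot.2 <| Subtype.ext <| ?_
  ext i j
  refine hfg (Prod.ext ?_ ?_)
  · exact congrFun (congrFun (congrArg Subtype.val (hf.trans (map_one (map f)).symm)) i) j
  · exact congrFun (congrFun (congrArg Subtype.val (hg.trans (map_one (map g)).symm)) i) j

variable {q : ℕ}

variable (n) in
def reductionKernel {d : ℕ} (h : d ∣ q) : Subgroup (SpecialLinearGroup n (ZMod q)) :=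
  (map (ZMod.castHom h (ZMod d))).ker

instance {d : ℕ} (h : d ∣ q) : (reductionKernel n h).Normal :=
  MonoidHom.normal_ker _

theorem reductionKernel_trans {d e : ℕ} (hde : e ∣ d) (hd : d ∣ q) :
    reductionKernel n (hde.trans hd) =
      (reductionKernel n hde).comap (map (ZMod.castHom hd (ZMod d))) := by
  rw [reductionKernel, reductionKernel, MonoidHom.comap_ker, ← map_comp, ZMod.castHom_comp]

theorem reductionKernel_le_of_dvd {d e : ℕ} (hde : e ∣ d) (hd : d ∣ q) :
    reductionKernel n hd ≤ reductionKernel n (hde.trans hd) := by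
  rw [reductionKernel_trans hde hd]
  exact MonoidHom.ker_le_comap _ _

theorem reductionKernel_self : reductionKernel n (dvd_refl q) = ⊥ := by
  rw [reductionKernel, ZMod.castHom_self]
  exact eq_bot_iff.2 fun γ hγ => hγ

theorem reductionKernel_one : reductionKernel n (one_dvd q) = ⊤ :=
  eq_top_iff.2 fun _ _ => Subtype.ext (Subsingleton.elim _ _)

theorem reductionKernel_inf_eq {a c : ℕ} (hac : a.Coprime c) (h : a * c ∣ q) :
    reductionKernel n ((dvd_mul_right a c).trans h) ⊓
      reductionKernel n ((dvd_mul_left c a).trans h) = reductionKernel n h := by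
  rw [reductionKernel_trans (dvd_mul_right a c) h, reductionKernel_trans (dvd_mul_left c a) h,
    ← Subgroup.comap_inf, reductionKernel, reductionKernel,
    ker_map_inf_ker_map (ZMod.castHom_prod_castHom_bijective hac).1, MonoidHom.comap_bot]
  rfl

theorem reductionKernel_gcd_le_sup (hq : Squarefree q) {a b : ℕ} (ha : a ∣ q) (hb : b ∣ q) :
    reductionKernel n ((Nat.gcd_dvd_left a b).trans ha) ≤
      reductionKernel n ha ⊔ reductionKernel n hb := by
  obtain ⟨c, rfl⟩ := ha
  have hac : a.Coprime c := Nat.coprime_of_squarefree_mul hq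
  intro γ hγ
  -- `α ≡ 1 mod a`, `α ≡ γ mod c`; so `α⁻¹ γ` is trivial mod `gcd a b` and mod `c`, hence mod `b`.
  obtain ⟨α, hα, hαγ⟩ := exists_map_eq_and_map_eq (ZMod.castHom_prod_castHom_bijective hac) 1
    (map (ZMod.castHom (dvd_mul_left c a) (ZMod c)) γ)
  replace hα : α ∈ reductionKernel n (dvd_mul_right a c) := hα
  have hβg : α⁻¹ * γ ∈ reductionKernel n ((Nat.gcd_dvd_left a b).trans (dvd_mul_right a c)) :=
    mul_mem (inv_mem (reductionKernel_le_of_dvd (Nat.gcd_dvd_left a b) _ hα)) hγ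
  have hβc : α⁻¹ * γ ∈ reductionKernel n (dvd_mul_left c a) := by
    rw [reductionKernel, MonoidHom.mem_ker, map_mul, map_inv, hαγ, inv_mul_cancel]
  have hgc : (a.gcd b).Coprime c := hac.coprime_dvd_left (Nat.gcd_dvd_left a b)
  have hgcq : a.gcd b * c ∣ a * c := mul_dvd_mul_right (Nat.gcd_dvd_left a b) c
  have hbgc : b ∣ a.gcd b * c := by
    rw [Nat.gcd_comm]
    exact dvd_gcd_mul_of_dvd_mul hb
  have hβ : α⁻¹ * γ ∈ reductionKernel n hb := by
    refine reductionKernel_le_of_dvd hbgc hgcq ?_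
    rw [← reductionKernel_inf_eq hgc hgcq]
    exact ⟨hβg, hβc⟩
  simpa using Subgroup.mul_mem_sup hα hβ

end Matrix.SpecialLinearGroup

section LeftInvariance

variable {G : Type*} [Group G]

def leftStabilizer {α : Type*} (φ : G → α) : Subgroup G where
  carrier := {γ | ∀ g, φ (γ⁻¹ * g) = φ g}
  mul_mem' {a b} (ha : ∀ g, _) (hb : ∀ g, _) g := by
    rw [_root_.mul_inv_rev, mul_assoc, hb, ha]
  one_mem' g := by rw [inv_one, one_mul]
  inv_mem' {a} (ha : ∀ g, _) g := by rw [inv_inv, ← ha (a * g), inv_mul_cancel_left]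

variable {M : Type*} [AddCommMonoid M] (K : Subgroup G) [Fintype K]

def leftAverage (ψ : G → M) (g : G) : M :=
  ∑ k : K, ψ ((k : G)⁻¹ * g)

theorem le_leftStabilizer_leftAverage (ψ : G → M) : K ≤ leftStabilizer (leftAverage K ψ) :=
  fun γ hγ g => by
    simp only [leftAverage, ← mul_assoc, ← _root_.mul_inv_rev]
    exact Equiv.sum_comp (Equiv.mulLeft (⟨γ, hγ⟩ : K)) fun k : K => ψ ((k : G)⁻¹ * g)

theorem le_leftStabilizer_leftAverage_of_normal {H : Subgroup G} [hH : H.Normal] {ψ : G → M}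
    (hψ : H ≤ leftStabilizer ψ) : H ≤ leftStabilizer (leftAverage K ψ) :=
  fun h hh g => Finset.sum_congr rfl fun k _ => by
    have hconj : (k : G)⁻¹ * h * k ∈ H := by simpa using hH.conj_mem h hh (k : G)⁻¹
    calc ψ ((k : G)⁻¹ * (h⁻¹ * g)) = ψ (((k : G)⁻¹ * h * k)⁻¹ * ((k : G)⁻¹ * g)) := by group
      _ = ψ ((k : G)⁻¹ * g) := hψ hconj _

variable [Fintype G]

theorem eq_zero_of_top_le_leftStabilizer [Module.IsTorsionFree ℕ M] {φ : G → M}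
    (hφ : ⊤ ≤ leftStabilizer φ) (hsum : ∑ g, φ g = 0) : φ = 0 := by
  have hconst : ∀ g, φ g = φ 1 := fun g => by simpa using (hφ (Subgroup.mem_top g) g).symm
  have hcard : Fintype.card G • φ 1 = 0 := by
    rw [← hsum, Finset.sum_congr rfl fun g _ => hconst g, Finset.sum_const, Finset.card_univ]
  funext g
  rw [hconst, Pi.zero_apply]
  exact (smul_eq_zero.1 hcard).resolve_left Fintype.card_ne_zero

theorem sum_leftAverage (ψ : G → M) :
    ∑ g, leftAverage K ψ g = Fintype.card K • ∑ g, ψ g := by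
  simp only [leftAverage]
  rw [Finset.sum_comm, ← Finset.card_univ, ← Finset.sum_const]
  exact Finset.sum_congr rfl fun k _ => Equiv.sum_comp (Equiv.mulLeft (k : G)⁻¹) ψ

theorem sum_mul_leftAverage {R : Type*} [NonUnitalNonAssocSemiring R] {φ : G → R}
    (hφ : K ≤ leftStabilizer φ) (ψ : G → R) :
    ∑ g, φ g * leftAverage K ψ g = Fintype.card K • ∑ g, φ g * ψ g := by
  simp only [leftAverage, Finset.mul_sum]
  rw [Finset.sum_comm, ← Finset.card_univ, ← Finset.sum_const]
  refine Finset.sum_congr rfl fun k _ => ?_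
  rw [← Equiv.sum_comp (Equiv.mulLeft (k : G))]
  refine Finset.sum_congr rfl fun g _ => ?_
  have hk : φ (k * g) = φ g := by simpa using hφ (inv_mem k.2) g
  rw [Equiv.coe_mulLeft, inv_mul_cancel_left, hk]

end LeftInvariance

section Orthogonality

open Matrix.SpecialLinearGroup

variable {q : ℕ} [NeZero q]

theorem mem_EhatSL2_iff {d : ℕ} (h : d ∣ q) {φ : SL2Mod q → ℂ} :
    φ ∈ EhatSL2 q d h ↔ (∑ g, φ g = 0) ∧ reductionKernel (Fin 2) h ≤ leftStabilizer φ :=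
  Iff.rfl

theorem innerSL2_conj_symm (φ ψ : SL2Mod q → ℂ) :
    starRingEnd ℂ (innerSL2 q ψ φ) = innerSL2 q φ ψ := by
  simp [innerSL2, mul_comm]

theorem innerSL2_eq_zero_of_not_dvd (hsf : Squarefree q) {a b : ℕ} (ha : a ∣ q) (hb : b ∣ q)
    (hab : ¬a ∣ b) {φ ψ : SL2Mod q → ℂ} (hφ : φ ∈ EnewSL2 q a ha) (hψ : ψ ∈ EhatSL2 q b hb) :
    innerSL2 q φ ψ = 0 := by
  classical
  set K := reductionKernel (Fin 2) ha
  have hKψ : leftAverage K ψ ∈ EhatSL2 q (a.gcd b) ((Nat.gcd_dvd_left a b).trans ha) :=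
    ⟨by rw [sum_leftAverage, hψ.1, smul_zero],
      (reductionKernel_gcd_le_sup hsf ha hb).trans <| sup_le (le_leftStabilizer_leftAverage K ψ)
        (le_leftStabilizer_leftAverage_of_normal K hψ.2)⟩
  have hgcd : a.gcd b ≠ a := fun h => hab (h ▸ Nat.gcd_dvd_right a b)
  have h0 := hφ.2 _ (Nat.gcd_dvd_left a b) hgcd _ hKψ
  have hφK : K ≤ leftStabilizer fun g => starRingEnd ℂ (φ g) :=
    fun k hk g => congrArg _ (hφ.1.2 k hk g)
  rw [innerSL2, sum_mul_leftAverage K hφK, smul_eq_zero] at h0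
  exact h0.resolve_left Fintype.card_ne_zero

theorem innerSL2_eq_zero_of_ne (hsf : Squarefree q) {d₁ d₂ : ℕ} (h₁ : d₁ ∣ q) (h₂ : d₂ ∣ q)
    (hne : d₁ ≠ d₂) {φ ψ : SL2Mod q → ℂ} (hφ : φ ∈ EnewSL2 q d₁ h₁) (hψ : ψ ∈ EnewSL2 q d₂ h₂) :
    innerSL2 q φ ψ = 0 := by
  by_cases hd : d₁ ∣ d₂
  · rw [← innerSL2_conj_symm, innerSL2_eq_zero_of_not_dvd hsf h₂ h₁
      (fun h => hne (Nat.dvd_antisymm hd h)) hψ hφ.1, map_zero]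
  · exact innerSL2_eq_zero_of_not_dvd hsf h₁ h₂ hd hφ hψ.1

end Orthogonality

section NewPart

variable {𝕜 E : Type*} [RCLike 𝕜] [NormedAddCommGroup E] [InnerProductSpace 𝕜 E]

def newPart (W : ℕ → Submodule 𝕜 E) (d : ℕ) : Submodule 𝕜 E :=
  W d ⊓ (⨆ e ∈ d.properDivisors, W e)ᗮ

theorem le_iSup_newPart [FiniteDimensional 𝕜 E] {W : ℕ → Submodule 𝕜 E} {q : ℕ} (hq : q ≠ 0)
    (hW : ∀ d e, d ∣ e → e ∣ q → W d ≤ W e) {d : ℕ} (hd : d ∣ q) :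
    W d ≤ ⨆ e ∈ d.divisors, newPart W e := by
  induction d using Nat.strong_induction_on with
  | _ d ih =>
  have hd0 : d ≠ 0 := ne_zero_of_dvd_ne_zero hq hd
  intro x hx
  obtain ⟨y, hy, z, hz, rfl⟩ := (⨆ e ∈ d.properDivisors, W e).exists_add_mem_mem_orthogonal x
  have hSW : ⨆ e ∈ d.properDivisors, W e ≤ W d :=
    iSup₂_le fun e he => hW e d (Nat.mem_properDivisors.1 he).1 hd
  have hS_new : ⨆ e ∈ d.properDivisors, W e ≤ ⨆ e ∈ d.divisors, newPart W e :=
    iSup₂_le fun e he => by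
      obtain ⟨hed, hlt⟩ := Nat.mem_properDivisors.1 he
      exact (ih e hlt (hed.trans hd)).trans
        (biSup_mono fun e' he' => Nat.divisors_subset_of_dvd hd0 hed he')
  have hz_new : z ∈ newPart W d := ⟨by simpa using (W d).sub_mem hx (hSW hy), hz⟩
  exact add_mem (hS_new hy)
    (le_iSup₂ (f := fun e (_ : e ∈ d.divisors) => newPart W e) d (Nat.mem_divisors_self d hd0)
      hz_new)

variable {ι : Type*} {N : ι → Submodule 𝕜 E}

theorem mem_orthogonal_biSup_iff {p : ι → Prop} {v : E} :
    v ∈ (⨆ i, ⨆ (_ : p i), N i)ᗮ ↔ ∀ i, p i → ∀ u ∈ N i, inner 𝕜 v u = 0 := by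
  simp only [← Submodule.iInf_orthogonal, Submodule.mem_iInf, Submodule.mem_orthogonal']
  exact forall_congr' fun i => by by_cases hi : p i <;> simp [hi]

theorem eq_zero_of_sum_eq_zero_of_pairwise_isOrtho (hN : Pairwise fun i j => N i ⟂ N j)
    {s : Finset ι} {f : ι → E} (hf : ∀ i ∈ s, f i ∈ N i) (hsum : ∑ i ∈ s, f i = 0) {i : ι}
    (hi : i ∈ s) : f i = 0 := by
  have h : inner 𝕜 (f i) (∑ j ∈ s, f j) = inner 𝕜 (f i) (f i) := by
    rw [inner_sum, Finset.sum_eq_single_of_mem i hi fun j hj hji =>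
      (hN hji.symm).inner_eq (hf i hi) (hf j hj)]
  rwa [hsum, inner_zero_right, eq_comm, inner_self_eq_zero] at h

theorem existsUnique_sum_mem_of_pairwise_isOrtho (hN : Pairwise fun i j => N i ⟂ N j)
    {s : Finset ι} {x : E} (hx : x ∈ ⨆ i ∈ s, N i) :
    ∃! f : ι → E, (∀ i ∈ s, f i ∈ N i) ∧ (∀ i ∉ s, f i = 0) ∧ x = ∑ i ∈ s, f i := by
  classical
  obtain ⟨μ, hμ⟩ := (Submodule.mem_iSup_finset_iff_exists_sum N x).1 hx
  have hsum : ∑ i ∈ s, (if i ∈ s then (μ i : E) else 0) = x :=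
    (Finset.sum_congr rfl fun i hi => if_pos hi).trans hμ
  refine ⟨fun i => if i ∈ s then (μ i : E) else 0,
    ⟨fun i hi => by simp [hi], fun i hi => by simp [hi], hsum.symm⟩, ?_⟩
  rintro g ⟨hg_mem, hg_zero, hg_sum⟩
  funext i
  by_cases hi : i ∈ s
  · refine sub_eq_zero.1 (eq_zero_of_sum_eq_zero_of_pairwise_isOrtho hN
      (f := fun i => g i - if i ∈ s then (μ i : E) else 0) (fun j hj => ?_) ?_ hi)
    · simpa [hj] using (N j).sub_mem (hg_mem j hj) (μ j).2
    · rw [Finset.sum_sub_distrib, ← hg_sum, hsum, sub_self]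
  · simp [hi, hg_zero i hi]

end NewPart

section L2

open Matrix.SpecialLinearGroup

variable (q : ℕ) [NeZero q]

def ehatSubmodule (d : ℕ) : Submodule ℂ (EuclideanSpace ℂ (SL2Mod q)) :=
  if h : d ∣ q then
    { carrier := {v | v.ofLp ∈ EhatSL2 q d h}
      add_mem' := fun {v w} ⟨hv, hv'⟩ ⟨hw, hw'⟩ =>
        ⟨by simp [Finset.sum_add_distrib, hv, hw], fun γ hγ g => by simp [hv' γ hγ g, hw' γ hγ g]⟩
      zero_mem' := ⟨by simp, fun _ _ _ => rfl⟩
      smul_mem' := fun c v ⟨hv, hv'⟩ =>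
        ⟨by simp [← Finset.mul_sum, hv], fun γ hγ g => by simp [hv' γ hγ g]⟩ }
  else ⊥

variable {q}

theorem inner_eq_innerSL2 (v w : EuclideanSpace ℂ (SL2Mod q)) :
    inner ℂ v w = innerSL2 q v.ofLp w.ofLp := by
  simp [EuclideanSpace.inner_eq_star_dotProduct, dotProduct, innerSL2, mul_comm]

theorem mem_ehatSubmodule {d : ℕ} (h : d ∣ q) {v : EuclideanSpace ℂ (SL2Mod q)} :
    v ∈ ehatSubmodule q d ↔ v.ofLp ∈ EhatSL2 q d h := by
  rw [ehatSubmodule, dif_pos h]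
  rfl

theorem ehatSubmodule_mono {d e : ℕ} (hde : d ∣ e) (he : e ∣ q) :
    ehatSubmodule q d ≤ ehatSubmodule q e := fun v hv => by
  rw [mem_ehatSubmodule (hde.trans he)] at hv
  exact (mem_ehatSubmodule he).2 ⟨hv.1, fun γ hγ => hv.2 γ (reductionKernel_le_of_dvd hde he hγ)⟩

theorem newPart_ehatSubmodule_one : newPart (ehatSubmodule q) 1 = ⊥ := by
  refine eq_bot_iff.2 fun v hv => ?_
  obtain ⟨hsum, hinv⟩ := (mem_ehatSubmodule (one_dvd q)).1 hv.1
  have h0 := eq_zero_of_top_le_leftStabilizer (reductionKernel_one.symm.le.trans hinv) hsum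
  exact (Submodule.mem_bot ℂ).2 (WithLp.ofLp_injective 2 (by simpa using h0))

theorem newPart_ehatSubmodule_of_not_dvd {d : ℕ} (hd : ¬d ∣ q) :
    newPart (ehatSubmodule q) d = ⊥ :=
  eq_bot_iff.2 <| inf_le_left.trans (by rw [ehatSubmodule, dif_neg hd])

theorem mem_newPart_ehatSubmodule {d : ℕ} (h : d ∣ q) {v : EuclideanSpace ℂ (SL2Mod q)} :
    v ∈ newPart (ehatSubmodule q) d ↔ v.ofLp ∈ EnewSL2 q d h := by
  have hd0 : d ≠ 0 := ne_zero_of_dvd_ne_zero (NeZero.ne q) h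
  rw [newPart, Submodule.mem_inf, mem_ehatSubmodule h, mem_orthogonal_biSup_iff]
  refine and_congr_right fun _ => ⟨fun H d' h' hne ψ hψ => ?_, fun H e he u hu => ?_⟩
  · have hd' : d' ∈ d.properDivisors :=
      Nat.mem_properDivisors.2 ⟨h', (Nat.le_of_dvd (Nat.pos_of_ne_zero hd0) h').lt_of_ne hne⟩
    simpa [inner_eq_innerSL2] using
      H d' hd' (WithLp.toLp 2 ψ) ((mem_ehatSubmodule (h'.trans h)).2 hψ)
  · obtain ⟨he, hlt⟩ := Nat.mem_properDivisors.1 he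
    rw [inner_eq_innerSL2]
    exact H e he hlt.ne _ ((mem_ehatSubmodule (he.trans h)).1 hu)

theorem pairwise_isOrtho_newPart_ehatSubmodule (hsf : Squarefree q) :
    Pairwise fun d₁ d₂ => newPart (ehatSubmodule q) d₁ ⟂ newPart (ehatSubmodule q) d₂ := by
  intro d₁ d₂ hne
  by_cases h₁ : d₁ ∣ q
  swap
  · rw [newPart_ehatSubmodule_of_not_dvd h₁]
    exact Submodule.isOrtho_bot_left
  by_cases h₂ : d₂ ∣ q
  swap
  · rw [newPart_ehatSubmodule_of_not_dvd h₂]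
    exact Submodule.isOrtho_bot_right
  refine Submodule.isOrtho_iff_inner_eq.2 fun u hu v hv => ?_
  rw [inner_eq_innerSL2]
  exact innerSL2_eq_zero_of_ne hsf h₁ h₂ hne ((mem_newPart_ehatSubmodule h₁).1 hu)
    ((mem_newPart_ehatSubmodule h₂).1 hv)

theorem toLp_mem_iSup_newPart_ehatSubmodule {φ : SL2Mod q → ℂ} (hφ : ∑ g, φ g = 0) :
    WithLp.toLp 2 φ ∈ ⨆ d ∈ q.divisors.erase 1, newPart (ehatSubmodule q) d := by
  have hφq : WithLp.toLp 2 φ ∈ ehatSubmodule q q :=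
    (mem_ehatSubmodule dvd_rfl).2 <|
      (mem_EhatSL2_iff dvd_rfl).2 ⟨hφ, by rw [reductionKernel_self]; exact bot_le⟩
  have h := le_iSup_newPart (NeZero.ne q) (fun d e hde he => ehatSubmodule_mono hde he) dvd_rfl hφq
  rwa [← Finset.insert_erase (Nat.one_mem_divisors.2 (NeZero.ne q)), Finset.iSup_insert,
    newPart_ehatSubmodule_one, bot_sup_eq] at h

end L2

/-- For square-free `q`, `L²₀(SL₂(ℤ/qℤ))` decomposes as the orthogonal direct sum
of the new subspaces `E^q_{q'}` over the divisors `q' ≠ 1` of `q`: the pieces are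
pairwise orthogonal and every function orthogonal to constants has a unique
decomposition into components from these pieces. -/
theorem L20_orthogonal_decomposition (q : ℕ) [NeZero q] (hsf : Squarefree q) :
    (∀ (d₁ d₂ : ℕ) (h₁ : d₁ ∣ q) (h₂ : d₂ ∣ q), d₁ ≠ d₂ →
      ∀ φ ∈ EnewSL2 q d₁ h₁, ∀ ψ ∈ EnewSL2 q d₂ h₂, innerSL2 q φ ψ = 0) ∧
    ∀ φ : SL2Mod q → ℂ, (∑ g : SL2Mod q, φ g = 0) →
      ∃! f : ℕ → (SL2Mod q → ℂ),
        (∀ (d : ℕ) (hd : d ∈ q.divisors.erase 1),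
          f d ∈ EnewSL2 q d
            (Nat.dvd_of_mem_divisors (Finset.mem_of_mem_erase hd))) ∧
        (∀ d : ℕ, d ∉ q.divisors.erase 1 → f d = 0) ∧
        φ = ∑ d ∈ q.divisors.erase 1, f d := by
  refine ⟨fun d₁ d₂ h₁ h₂ hne φ hφ ψ hψ => innerSL2_eq_zero_of_ne hsf h₁ h₂ hne hφ hψ,
    fun φ hφ => ?_⟩
  obtain ⟨f, ⟨hf_mem, hf_zero, hf_sum⟩, hf_uniq⟩ :=
    existsUnique_sum_mem_of_pairwise_isOrtho (pairwise_isOrtho_newPart_ehatSubmodule hsf)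
      (toLp_mem_iSup_newPart_ehatSubmodule hφ)
  refine ⟨fun d => (f d).ofLp, ⟨fun d hd => (mem_newPart_ehatSubmodule _).1 (hf_mem d hd),
    fun d hd => by simp [hf_zero d hd], by rw [← WithLp.ofLp_sum, ← hf_sum]⟩, ?_⟩
  rintro g ⟨hg_mem, hg_zero, hg_sum⟩
  have hgf := hf_uniq (fun d => WithLp.toLp 2 (g d))
    ⟨fun d hd => (mem_newPart_ehatSubmodule _).2 (hg_mem d hd), fun d hd => by simp [hg_zero d hd],
      by rw [← WithLp.toLp_sum, ← hg_sum]⟩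
  funext d
  rw [← hgf]
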